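/- Let a forward Markov model have parameters M_{k,k-1}, M_k (k ∈ [1,N]) and M₀ (all M_k positive definite), and define backward Markov parameters by (M₀^B)⁻¹ = M₀⁻¹ + M₁,₀' M₁⁻¹ M₁,₀, M^B_{0,1} = M₀^B M₁,₀' M₁⁻¹, (M^B_{k-1})⁻¹ = M_{k-1}⁻¹ + M_{k,k-1}' M_k⁻¹ M_{k,k-1} - (M^B_{k-2,k-1})'(M^B_{k-2})⁻¹ M^B_{k-2,k-1}, M^B_{k-1,k} = M^B_{k-1} M_{k,k-1}' M_k⁻¹ for k = 2,…,N, and (M^B_N)⁻¹ = M_N⁻¹ - (M^B_{N-1,N})'(M^B_{N-1})⁻¹ M^B_{N-1,N}. Then (𝓜^B)' (M^B)⁻¹ 𝓜^B = 𝓜' M⁻¹ 𝓜, i.e., the backward model is probabilistically equivalent to the forward model. No invertibility of the transition matrices M_{k,k-1} is required. -/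

import Mathlib

open Matrix MeasureTheory

/-- Square `d × d` real matrices (one block). -/
abbrev SqMat (d : ℕ) := Matrix (Fin d) (Fin d) ℝ

/-- Big `(N+1)d × (N+1)d` real matrices, viewed as `(N+1) × (N+1)` arrays of
`d × d` blocks. -/
abbrev BigMat (N d : ℕ) := Matrix (Fin (N+1) × Fin d) (Fin (N+1) × Fin d) ℝ

/-- The `(i,j)` block of a big matrix. -/
def blk {N d : ℕ} (A : BigMat N d) (i j : Fin (N+1)) : SqMat d :=
  fun a b => A (i, a) (j, b)

/-- Block diagonal big matrix with diagonal blocks `D 0, …, D N`. -/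
def bdiag (N d : ℕ) (D : ℕ → SqMat d) : BigMat N d :=
  fun p q => if (p.1 : ℕ) = (q.1 : ℕ) then D (p.1 : ℕ) p.2 q.2 else 0

/-- The block lower bidiagonal matrix `𝓜` of a forward Markov model: identity blocks
on the diagonal and block `-(T k) = -M_{k,k-1}` in position `(k, k-1)` for `k ∈ [1,N]`. -/
def lowerBidiag (N d : ℕ) (T : ℕ → SqMat d) : BigMat N d :=
  fun p q =>
    if (p.1 : ℕ) = (q.1 : ℕ) then (if p.2 = q.2 then 1 else 0)
    else if (q.1 : ℕ) + 1 = (p.1 : ℕ) then -(T (p.1 : ℕ) p.2 q.2) else 0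

/-- The block upper bidiagonal matrix `𝓜ᴮ` of a backward Markov model: identity blocks
on the diagonal and block `-(T k) = -Mᴮ_{k,k+1}` in position `(k, k+1)` for `k ∈ [0,N-1]`. -/
def upperBidiag (N d : ℕ) (T : ℕ → SqMat d) : BigMat N d :=
  fun p q =>
    if (p.1 : ℕ) = (q.1 : ℕ) then (if p.2 = q.2 then 1 else 0)
    else if (p.1 : ℕ) + 1 = (q.1 : ℕ) then -(T (p.1 : ℕ) p.2 q.2) else 0

section Aux
variable {N d : ℕ}

lemma blk_ext {A B : BigMat N d} (h : ∀ i j, blk A i j = blk B i j) : A = B := by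
  ext ⟨i,a⟩ ⟨j,b⟩
  exact congrFun (congrFun (h i j) a) b

lemma blk_transpose (A : BigMat N d) (i j : Fin (N+1)) : blk Aᵀ i j = (blk A j i)ᵀ := rfl

lemma blk_mul (A B : BigMat N d) (i j : Fin (N+1)) :
    blk (A * B) i j = ∑ k, blk A i k * blk B k j := by
  ext a b
  simp [blk, Matrix.mul_apply, Fintype.sum_prod_type, Matrix.sum_apply]

lemma blk_bdiag (D : ℕ → SqMat d) (i j : Fin (N+1)) :
    blk (bdiag N d D) i j = if i = j then D (i:ℕ) else 0 := by
  ext a b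
  simp only [blk, bdiag, Fin.val_eq_val]
  split_ifs <;> simp

lemma blk_upper (T : ℕ → SqMat d) (k i : Fin (N+1)) :
    blk (upperBidiag N d T) k i =
      if (k:ℕ) = (i:ℕ) then 1 else if (k:ℕ)+1 = (i:ℕ) then -(T (k:ℕ)) else 0 := by
  ext a b
  simp only [blk, upperBidiag]
  split_ifs <;> simp_all [Matrix.one_apply]

lemma blk_lower (T : ℕ → SqMat d) (k i : Fin (N+1)) :
    blk (lowerBidiag N d T) k i =
      if (k:ℕ) = (i:ℕ) then 1 else if (i:ℕ)+1 = (k:ℕ) then -(T (k:ℕ)) else 0 := by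
  ext a b
  simp only [blk, lowerBidiag]
  split_ifs <;> simp_all [Matrix.one_apply]

lemma blk_conj (A : BigMat N d) (D : ℕ → SqMat d) (i j : Fin (N+1)) :
    blk (Aᵀ * bdiag N d D * A) i j = ∑ k, (blk A k i)ᵀ * D (k:ℕ) * blk A k j := by
  rw [blk_mul]
  refine Finset.sum_congr rfl fun k _ => ?_
  rw [blk_mul]
  have : ∀ l : Fin (N+1), blk Aᵀ i l * blk (bdiag N d D) l k
      = if l = k then (blk A l i)ᵀ * D (l:ℕ) else 0 := by
    intro l
    rw [blk_bdiag, blk_transpose]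
    split_ifs <;> simp
  simp only [this, Finset.sum_ite_eq' Finset.univ k, Finset.mem_univ, if_true]

lemma sum_eq_pair {α : Type*} [AddCommMonoid α] {n : ℕ} (f : Fin n → α) (a b : Fin n)
    (hab : a ≠ b) (hf : ∀ k, k ≠ a → k ≠ b → f k = 0) :
    ∑ k, f k = f a + f b := by
  rw [← Finset.sum_pair hab]
  exact (Finset.sum_subset (Finset.subset_univ _) (fun x _ hx => by
    simp only [Finset.mem_insert, Finset.mem_singleton, not_or] at hx
    exact hf x hx.1 hx.2)).symm

lemma sum_eq_single' {α : Type*} [AddCommMonoid α] {n : ℕ} (f : Fin n → α) (a : Fin n)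
    (hf : ∀ k, k ≠ a → f k = 0) : ∑ k, f k = f a :=
  Finset.sum_eq_single_of_mem a (Finset.mem_univ a) fun k _ hk => hf k hk

end Aux

/-- from forward Markov model parameters `M_{k,k-1} = Tr k`, `M_k = M k`
(`M_k` positive definite, the transition matrices possibly singular), the backward
parameters `Mᴮ_k = MB k`, `Mᴮ_{k,k+1} = TB k` defined by the stated recursion satisfy
`(𝓜ᴮ)ᵀ (Mᴮ)⁻¹ 𝓜ᴮ = 𝓜ᵀ M⁻¹ 𝓜`, i.e. the backward model is probabilistically
equivalent to the forward model. -/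
theorem backward_model_probabilistically_equivalent {N d : ℕ} (hN : 0 < N)
    (Tr M TB MB : ℕ → SqMat d)
    (hM : ∀ k ≤ N, (M k).PosDef) (hMB : ∀ k ≤ N, (MB k).PosDef)
    (h0 : (MB 0)⁻¹ = (M 0)⁻¹ + (Tr 1)ᵀ * (M 1)⁻¹ * Tr 1)
    (hTB0 : TB 0 = MB 0 * (Tr 1)ᵀ * (M 1)⁻¹)
    (hmid : ∀ k, 1 ≤ k → k ≤ N - 1 →
      (MB k)⁻¹ = (M k)⁻¹ + (Tr (k+1))ᵀ * (M (k+1))⁻¹ * Tr (k+1)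
        - (TB (k-1))ᵀ * (MB (k-1))⁻¹ * TB (k-1))
    (hTB : ∀ k, 1 ≤ k → k ≤ N - 1 → TB k = MB k * (Tr (k+1))ᵀ * (M (k+1))⁻¹)
    (hlast : (MB N)⁻¹ = (M N)⁻¹ - (TB (N-1))ᵀ * (MB (N-1))⁻¹ * TB (N-1)) :
    (upperBidiag N d TB)ᵀ * bdiag N d (fun k => (MB k)⁻¹) * upperBidiag N d TB =
      (lowerBidiag N d Tr)ᵀ * bdiag N d (fun k => (M k)⁻¹) * lowerBidiag N d Tr := by
  -- symmetry of inverses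
  have hMs : ∀ k ≤ N, ((M k)⁻¹)ᵀ = (M k)⁻¹ := by
    intro k hk
    have ht : (M k)ᵀ = M k := (by simpa using (hM k hk).isHermitian : (M k).IsSymm).eq
    rw [Matrix.transpose_nonsing_inv, ht]
  have hMBs : ∀ k ≤ N, ((MB k)⁻¹)ᵀ = (MB k)⁻¹ := by
    intro k hk
    have ht : (MB k)ᵀ = MB k := (by simpa using (hMB k hk).isHermitian : (MB k).IsSymm).eq
    rw [Matrix.transpose_nonsing_inv, ht]
  -- invertibility of MB
  have hMBu : ∀ k ≤ N, (MB k)⁻¹ * MB k = 1 := by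
    intro k hk
    exact Matrix.nonsing_inv_mul _ (isUnit_iff_ne_zero.2 (ne_of_gt (hMB k hk).det_pos))
  -- key off-diagonal identity
  have key : ∀ k, k + 1 ≤ N → (MB k)⁻¹ * TB k = (Tr (k+1))ᵀ * (M (k+1))⁻¹ := by
    intro k hk
    have hTBk : TB k = MB k * (Tr (k+1))ᵀ * (M (k+1))⁻¹ := by
      rcases Nat.eq_zero_or_pos k with h | h
      · subst h; exact hTB0
      · exact hTB k h (by omega)
    rw [hTBk, ← mul_assoc, ← mul_assoc, hMBu k (by omega), one_mul]
  have key' : ∀ k, k + 1 ≤ N → (TB k)ᵀ * (MB k)⁻¹ = (M (k+1))⁻¹ * Tr (k+1) := by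
    intro k hk
    have := congrArg Matrix.transpose (key k hk)
    rw [Matrix.transpose_mul, Matrix.transpose_mul, hMBs k (by omega),
      Matrix.transpose_transpose, hMs (k+1) hk] at this
    exact this
  apply blk_ext
  intro i j
  rw [blk_conj, blk_conj]
  have hi : (i:ℕ) ≤ N := by omega
  have hj : (j:ℕ) ≤ N := by omega
  by_cases h1 : (i:ℕ) = (j:ℕ)
  · -- diagonal block
    have hij : i = j := Fin.ext h1
    subst hij
    by_cases hiz : (i:ℕ) = 0
    · -- i = 0
      have hlhs : (∑ k, (blk (upperBidiag N d TB) k i)ᵀ * (fun k => (MB k)⁻¹) (k:ℕ)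
          * blk (upperBidiag N d TB) k i) = (MB 0)⁻¹ := by
        rw [sum_eq_single' _ i]
        · simp [blk_upper, hiz]
        · intro k hk
          have : (k:ℕ) ≠ (i:ℕ) := fun h => hk (Fin.ext h)
          rw [blk_upper, if_neg this, if_neg (by omega)]
          simp
      have hrhs : (∑ k, (blk (lowerBidiag N d Tr) k i)ᵀ * (fun k => (M k)⁻¹) (k:ℕ)
          * blk (lowerBidiag N d Tr) k i)
          = (M 0)⁻¹ + (Tr 1)ᵀ * (M 1)⁻¹ * Tr 1 := by
        have h1lt : (1:ℕ) < N + 1 := by omega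
        rw [sum_eq_pair _ i ⟨1, h1lt⟩ (by apply Fin.ne_of_val_ne; simp [hiz])]
        · rw [blk_lower, blk_lower, if_pos rfl, if_neg (by simp [hiz]),
            if_pos (by simp [hiz])]
          simp [hiz]
        · intro k hk1 hk2
          have e1 : (k:ℕ) ≠ (i:ℕ) := fun h => hk1 (Fin.ext h)
          have e2 : (k:ℕ) ≠ 1 := fun h => hk2 (Fin.ext (by simpa using h))
          rw [blk_lower, if_neg e1, if_neg (by omega)]
          simp
      rw [hlhs, hrhs, h0]
    · -- i > 0
      have hpos : 0 < (i:ℕ) := Nat.pos_of_ne_zero hiz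
      have hplt : (i:ℕ) - 1 < N + 1 := by omega
      have hlhs : (∑ k, (blk (upperBidiag N d TB) k i)ᵀ * (fun k => (MB k)⁻¹) (k:ℕ)
          * blk (upperBidiag N d TB) k i)
          = (MB (i:ℕ))⁻¹ + (TB ((i:ℕ)-1))ᵀ * (MB ((i:ℕ)-1))⁻¹ * TB ((i:ℕ)-1) := by
        rw [sum_eq_pair _ i ⟨(i:ℕ)-1, hplt⟩ (by apply Fin.ne_of_val_ne; simp; omega)]
        · rw [blk_upper, blk_upper, if_pos rfl, if_neg (by simp; omega),
            if_pos (by simp; omega)]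
          simp
        · intro k hk1 hk2
          have e1 : (k:ℕ) ≠ (i:ℕ) := fun h => hk1 (Fin.ext h)
          have e2 : (k:ℕ) ≠ (i:ℕ) - 1 := fun h => hk2 (Fin.ext (by simpa using h))
          rw [blk_upper, if_neg e1, if_neg (by omega)]
          simp
      rw [hlhs]
      by_cases hiN : (i:ℕ) = N
      · -- i = N : RHS is single term
        have hrhs : (∑ k, (blk (lowerBidiag N d Tr) k i)ᵀ * (fun k => (M k)⁻¹) (k:ℕ)
            * blk (lowerBidiag N d Tr) k i) = (M (i:ℕ))⁻¹ := by
          rw [sum_eq_single' _ i]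
          · simp [blk_lower]
          · intro k hk
            have e1 : (k:ℕ) ≠ (i:ℕ) := fun h => hk (Fin.ext h)
            rw [blk_lower, if_neg e1, if_neg (by omega)]
            simp
        rw [hrhs, hiN, hlast]
        abel
      · -- 0 < i < N
        have hiN' : (i:ℕ) < N := lt_of_le_of_ne hi hiN
        have hqlt : (i:ℕ) + 1 < N + 1 := by omega
        have hrhs : (∑ k, (blk (lowerBidiag N d Tr) k i)ᵀ * (fun k => (M k)⁻¹) (k:ℕ)
            * blk (lowerBidiag N d Tr) k i)
            = (M (i:ℕ))⁻¹ + (Tr ((i:ℕ)+1))ᵀ * (M ((i:ℕ)+1))⁻¹ * Tr ((i:ℕ)+1) := by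
          rw [sum_eq_pair _ i ⟨(i:ℕ)+1, hqlt⟩ (by apply Fin.ne_of_val_ne; simp)]
          · rw [blk_lower, blk_lower, if_pos rfl, if_neg (by simp), if_pos (by simp)]
            simp
          · intro k hk1 hk2
            have e1 : (k:ℕ) ≠ (i:ℕ) := fun h => hk1 (Fin.ext h)
            have e2 : (k:ℕ) ≠ (i:ℕ) + 1 := fun h => hk2 (Fin.ext (by simpa using h))
            rw [blk_lower, if_neg e1, if_neg (by omega)]
            simp
        rw [hrhs, hmid (i:ℕ) hpos (by omega)]
        abel
  · by_cases h2 : (i:ℕ) + 1 = (j:ℕ)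
    · -- superdiagonal block
      have hlhs : (∑ k, (blk (upperBidiag N d TB) k i)ᵀ * (fun k => (MB k)⁻¹) (k:ℕ)
          * blk (upperBidiag N d TB) k j) = -((MB (i:ℕ))⁻¹ * TB (i:ℕ)) := by
        rw [sum_eq_single' _ i]
        · rw [blk_upper, blk_upper, if_pos rfl, if_neg h1, if_pos h2]
          simp [mul_assoc]
        · intro k hk
          have e1 : (k:ℕ) ≠ (i:ℕ) := fun h => hk (Fin.ext h)
          by_cases e2 : (k:ℕ) + 1 = (i:ℕ)
          · rw [blk_upper (TB) k j, if_neg (by omega), if_neg (by omega)]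
            simp
          · rw [blk_upper (TB) k i, if_neg e1, if_neg e2]
            simp
      have hrhs : (∑ k, (blk (lowerBidiag N d Tr) k i)ᵀ * (fun k => (M k)⁻¹) (k:ℕ)
          * blk (lowerBidiag N d Tr) k j) = -((Tr ((i:ℕ)+1))ᵀ * (M ((i:ℕ)+1))⁻¹) := by
        rw [sum_eq_single' _ j]
        · rw [blk_lower, blk_lower, if_neg (by omega), if_pos h2, if_pos rfl]
          rw [h2]
          simp
        · intro k hk
          have e1 : (k:ℕ) ≠ (j:ℕ) := fun h => hk (Fin.ext h)
          by_cases e2 : (k:ℕ) = (i:ℕ)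
          · rw [blk_lower Tr k j, if_neg e1, if_neg (by omega)]
            simp
          · rw [blk_lower Tr k i, if_neg e2, if_neg (by omega)]
            simp
      rw [hlhs, hrhs, key (i:ℕ) (by omega)]
    · by_cases h3 : (j:ℕ) + 1 = (i:ℕ)
      · -- subdiagonal block
        have hlhs : (∑ k, (blk (upperBidiag N d TB) k i)ᵀ * (fun k => (MB k)⁻¹) (k:ℕ)
            * blk (upperBidiag N d TB) k j) = -((TB (j:ℕ))ᵀ * (MB (j:ℕ))⁻¹) := by
          rw [sum_eq_single' _ j]
          · rw [blk_upper, blk_upper, if_neg (by omega), if_pos h3, if_pos rfl]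
            simp
          · intro k hk
            have e1 : (k:ℕ) ≠ (j:ℕ) := fun h => hk (Fin.ext h)
            by_cases e2 : (k:ℕ) = (i:ℕ)
            · rw [blk_upper TB k j, if_neg e1, if_neg (by omega)]
              simp
            · rw [blk_upper TB k i, if_neg e2, if_neg (by omega)]
              simp
        have hrhs : (∑ k, (blk (lowerBidiag N d Tr) k i)ᵀ * (fun k => (M k)⁻¹) (k:ℕ)
            * blk (lowerBidiag N d Tr) k j) = -((M ((j:ℕ)+1))⁻¹ * Tr ((j:ℕ)+1)) := by
          rw [sum_eq_single' _ i]
          · rw [blk_lower, blk_lower, if_pos rfl, if_neg (by omega), if_pos h3]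
            rw [← h3]
            simp
          · intro k hk
            have e1 : (k:ℕ) ≠ (i:ℕ) := fun h => hk (Fin.ext h)
            by_cases e2 : (k:ℕ) = (j:ℕ)
            · rw [blk_lower Tr k i, if_neg e1, if_neg (by omega)]
              simp
            · rw [blk_lower Tr k j, if_neg e2, if_neg (by omega)]
              simp
        rw [hlhs, hrhs, key' (j:ℕ) (by omega)]
      · -- far off-diagonal: both sides zero
        have hz1 : (∑ k, (blk (upperBidiag N d TB) k i)ᵀ * (fun k => (MB k)⁻¹) (k:ℕ)
            * blk (upperBidiag N d TB) k j) = 0 := by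
          refine Finset.sum_eq_zero fun k _ => ?_
          by_cases e1 : (k:ℕ) = (i:ℕ)
          · rw [blk_upper TB k j, if_neg (by omega), if_neg (by omega)]; simp
          · by_cases e2 : (k:ℕ) + 1 = (i:ℕ)
            · rw [blk_upper TB k j, if_neg (by omega), if_neg (by omega)]; simp
            · rw [blk_upper TB k i, if_neg e1, if_neg e2]; simp
        have hz2 : (∑ k, (blk (lowerBidiag N d Tr) k i)ᵀ * (fun k => (M k)⁻¹) (k:ℕ)
            * blk (lowerBidiag N d Tr) k j) = 0 := by
          refine Finset.sum_eq_zero fun k _ => ?_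
          by_cases e1 : (k:ℕ) = (i:ℕ)
          · rw [blk_lower Tr k j, if_neg (by omega), if_neg (by omega)]; simp
          · by_cases e2 : (i:ℕ) + 1 = (k:ℕ)
            · rw [blk_lower Tr k j, if_neg (by omega), if_neg (by omega)]; simp
            · rw [blk_lower Tr k i, if_neg e1, if_neg e2]; simp
        rw [hz1, hz2]
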